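/- arXiv:1204.5198 — 2 statements merged into one kernel-verified Lean document; each statement's English description precedes it below -/
import Mathlib

section
/- Let T be a tree on ω×ω and let s, t be finite sequences of naturals. Suppose that for every Hechler tree H with root s the set A_{s,t} ∩ [H] is nonempty. Then there exists an infinite well-founded subtree T' ⊆ {r ∈ ω^{<ω} : r comparable with s} with root s, whose set B of terminal (maximal) nodes satisfies: (1) every nonterminal node r of T' extending s has infinitely many n with r⌢n ∈ T'; and (2) for every r ∈ B there exists n ∈ ω such that for every Hechler tree H with root r, A_{r, t⌢n} ∩ [H] is nonempty. (Well-founded means T' has no infinite branch.) -/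
/-- The restriction `x↾n` of `x : ℕ → ℕ` to its first `n` values, as a finite sequence. -/
def res (x : ℕ → ℕ) (n : ℕ) : List ℕ := List.ofFn fun i : Fin n => x i

/-- A subtree of `ω^{<ω}`: a set of finite sequences closed under initial segments. -/
def IsSubtree (T : Set (List ℕ)) : Prop := ∀ s ∈ T, ∀ t : List ℕ, t <+: s → t ∈ T

/-- `[T]`, the set of branches of a subtree `T`. -/
def branches (T : Set (List ℕ)) : Set (ℕ → ℕ) := {x | ∀ n, res x n ∈ T}

/-- A Hechler tree with root `s`: a subtree containing `s`, all of whose members are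
comparable with `s`, and in which every node extending `s` splits cofinitely often. -/
def IsHechlerRoot (H : Set (List ℕ)) (s : List ℕ) : Prop :=
  IsSubtree H ∧ s ∈ H ∧ (∀ t ∈ H, t <+: s ∨ s <+: t) ∧
    ∀ t ∈ H, s <+: t → {n : ℕ | t ++ [n] ∉ H}.Finite

/-- A tree on `ω × ω`: pairs of finite sequences of equal length, closed under
coordinatewise initial segments. -/
def IsTree2 (T : Set (List ℕ × List ℕ)) : Prop :=
  (∀ p ∈ T, p.1.length = p.2.length) ∧
    ∀ p ∈ T, ∀ n : ℕ, (p.1.take n, p.2.take n) ∈ T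

/-- `A_{s,t}`: the set of `x ⊇ s` such that some `y ⊇ t` gives a branch `(x, y)` of `T`. -/
def Aset (T : Set (List ℕ × List ℕ)) (s t : List ℕ) : Set (ℕ → ℕ) :=
  {x | res x s.length = s ∧ ∃ y : ℕ → ℕ, res y t.length = t ∧ ∀ n, (res x n, res y n) ∈ T}

lemma res_length (x : ℕ → ℕ) (n : ℕ) : (res x n).length = n := by simp [res]

lemma res_succ (x : ℕ → ℕ) (n : ℕ) : res x (n+1) = res x n ++ [x n] := by
  unfold res; rw [List.ofFn_succ']; simp [List.concat_eq_append]

lemma res_prefix (x : ℕ → ℕ) {m n : ℕ} (h : m ≤ n) : res x m <+: res x n := by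
  induction n with
  | zero => interval_cases m; exact List.prefix_rfl
  | succ n ih =>
    rcases Nat.eq_or_lt_of_le h with rfl | hlt
    · exact List.prefix_rfl
    · exact (ih (Nat.lt_succ_iff.mp hlt)).trans ⟨[x n], (res_succ x n).symm⟩

lemma res_take (x : ℕ → ℕ) {m n : ℕ} (h : m ≤ n) : (res x n).take m = res x m := by
  apply List.ext_getElem
  · simp [res, h]
  · intro i h1 h2
    simp [res]

lemma prefix_res_eq {p : List ℕ} {x : ℕ → ℕ} {n : ℕ} (h : p <+: res x n) :
    res x p.length = p := by
  have hl : p.length ≤ n := by have := h.length_le; rwa [res_length] at this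
  conv_rhs => rw [List.prefix_iff_eq_take.mp h]
  rw [res_take x hl]

lemma eq_of_prefix_prefix_length {l1 l2 l3 : List ℕ} (h1 : l1 <+: l3) (h2 : l2 <+: l3)
    (h : l1.length = l2.length) : l1 = l2 := by
  rcases List.prefix_or_prefix_of_prefix h1 h2 with h' | h'
  · exact h'.eq_of_length h
  · exact (h'.eq_of_length h.symm).symm

lemma prefix_antisymm {l1 l2 : List ℕ} (h1 : l1 <+: l2) (h2 : l2 <+: l1) : l1 = l2 :=
  h1.eq_of_length (le_antisymm h1.length_le h2.length_le)

lemma prefix_concat_cases {p q : List ℕ} {k : ℕ} (h : p <+: q ++ [k]) :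
    p <+: q ∨ p = q ++ [k] := by
  rcases Nat.lt_or_ge q.length p.length with hlt | hle
  · right
    refine h.eq_of_length (le_antisymm h.length_le ?_)
    simpa using hlt
  · left
    rcases List.prefix_or_prefix_of_prefix h (List.prefix_append q [k]) with h' | h'
    · exact h'
    · exact (h'.eq_of_length (le_antisymm h'.length_le hle)).symm ▸ List.prefix_rfl

lemma exists_concat_prefix {r s : List ℕ} (h : r <+: s) (hne : r ≠ s) :
    ∃ a, r ++ [a] <+: s := by
  obtain ⟨d, rfl⟩ := h
  cases d with
  | nil => simp at hne
  | cons a d => exact ⟨a, ⟨d, by simp⟩⟩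

lemma concat_prefix_concat {q : List ℕ} {k k' : ℕ} {l : List ℕ} (h1 : q ++ [k] <+: l)
    (h2 : q ++ [k'] <+: l) : k = k' := by
  have := eq_of_prefix_prefix_length h1 h2 (by simp)
  simpa using this


def Large (T : Set (List ℕ × List ℕ)) (r u : List ℕ) : Prop :=
  ∀ H : Set (List ℕ), IsHechlerRoot H r → (Aset T r u ∩ branches H).Nonempty

def Kills (T : Set (List ℕ × List ℕ)) (H : Set (List ℕ)) (r u : List ℕ) : Prop :=
  IsHechlerRoot H r ∧ ∀ z ∈ Aset T r u, z ∉ branches H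

lemma exists_kills {T r u} (h : ¬ Large T r u) : ∃ H, Kills T H r u := by
  unfold Large at h
  push_neg at h
  obtain ⟨H, hH, hne⟩ := h
  exact ⟨H, hH, fun z hz hzb => (Set.eq_empty_iff_forall_notMem.mp hne z) ⟨hz, hzb⟩⟩

lemma large_splitting {T : Set (List ℕ × List ℕ)} {r u : List ℕ} (hL : Large T r u) :
    {k : ℕ | Large T (r ++ [k]) u}.Infinite := by
  by_contra hfin
  rw [Set.not_infinite] at hfin
  have hexk : ∀ k, ∃ H, ¬ Large T (r ++ [k]) u → Kills T H (r ++ [k]) u := by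
    intro k
    by_cases hk : Large T (r ++ [k]) u
    · exact ⟨∅, fun h => absurd hk h⟩
    · obtain ⟨H, hH⟩ := exists_kills hk; exact ⟨H, fun _ => hH⟩
  choose K hK using hexk
  set H : Set (List ℕ) :=
    {q | q <+: r ∨ ∃ k, ¬ Large T (r ++ [k]) u ∧ r ++ [k] <+: q ∧ q ∈ K k} with hHdef
  have hHech : IsHechlerRoot H r := by
    refine ⟨?_, Or.inl List.prefix_rfl, ?_, ?_⟩
    · -- subtree
      intro q hq p hp
      rcases hq with hq | ⟨k, hk, hrk, hqK⟩
      · exact Or.inl (hp.trans hq)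
      · rcases List.prefix_or_prefix_of_prefix hp hrk with h' | h'
        · rcases prefix_concat_cases h' with h'' | rfl
          · exact Or.inl h''
          · exact Or.inr ⟨k, hk, List.prefix_rfl, (hK k hk).1.1 q hqK _ hp⟩
        · exact Or.inr ⟨k, hk, h', (hK k hk).1.1 q hqK _ hp⟩
    · -- comparability
      intro q hq; rcases hq with hq | ⟨k, _, hrk, _⟩
      · exact Or.inl hq
      · exact Or.inr ((List.prefix_append r [k]).trans hrk)
    · -- splitting
      intro q hq hrq
      rcases hq with hq | ⟨k, hk, hrk, hqK⟩
      · have hqr : q = r := prefix_antisymm hq hrq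
        subst hqr
        apply Set.Finite.subset hfin
        intro k hk2
        by_contra hnl
        exact hk2 (Or.inr ⟨k, hnl, List.prefix_rfl, (hK k hnl).1.2.1⟩)
      · apply Set.Finite.subset ((hK k hk).1.2.2.2 q hqK hrk)
        intro j hj hmem
        exact hj (Or.inr ⟨k, hk, hrk.trans ⟨[j], rfl⟩, hmem⟩)
  obtain ⟨z, hzA, hzB⟩ := hL H hHech
  obtain ⟨hzr, y, hyt, hbr⟩ := hzA
  have h1 := hzB (r.length + 1)
  rcases h1 with h1 | ⟨k, hk, hpre, hmem⟩
  · have := h1.length_le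
    rw [res_length] at this
    omega
  · have hkk : r ++ [k] = res z (r.length + 1) :=
      hpre.eq_of_length (by simp [res_length])
    have hKH := hK k hk
    have hbrK : z ∈ branches (K k) := by
      intro n
      rcases le_or_gt n (r.length + 1) with hn | hn
      · exact hKH.1.1 _ (hkk ▸ hKH.1.2.1) _ (res_prefix z hn)
      · have h2 := hzB n
        rcases h2 with h2 | ⟨k', hk', hpre', hmem'⟩
        · have := h2.length_le
          rw [res_length] at this
          omega
        · have hk'k : k' = k :=
            concat_prefix_concat hpre' (hkk ▸ res_prefix z (le_of_lt hn))
          subst hk'k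
          exact hmem'
    have hzA' : z ∈ Aset T (r ++ [k]) u := by
      refine ⟨?_, y, hyt, hbr⟩
      have hlen : (r ++ [k]).length = r.length + 1 := by simp
      rw [hlen]
      exact hkk.symm
    exact hKH.2 z hzA' hbrK

inductive RRd (T : Set (List ℕ × List ℕ)) (t : List ℕ) : List ℕ → Type where
  | leaf (r : List ℕ) (h : ∃ n, Large T r (t ++ [n])) : RRd T t r
  | node (r : List ℕ) (S : Set ℕ) (hS : S.Infinite) (g : ∀ n ∈ S, RRd T t (r ++ [n])) :
      RRd T t r

lemma nonempty_RRd {T : Set (List ℕ × List ℕ)} {t s : List ℕ}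
    (h : ∀ H : Set (List ℕ), IsHechlerRoot H s → (Aset T s t ∩ branches H).Nonempty) :
    Nonempty (RRd T t s) := by
  by_contra hs
  have hBadLeaf : ∀ r, ¬ Nonempty (RRd T t r) → ∀ m, ¬ Large T r (t ++ [m]) :=
    fun r hr m hl => hr ⟨RRd.leaf r ⟨m, hl⟩⟩
  have hBadChild : ∀ r, ¬ Nonempty (RRd T t r) →
      {k | Nonempty (RRd T t (r ++ [k]))}.Finite := by
    intro r hr
    by_contra hinf
    exact hr ⟨RRd.node r _ hinf (fun n hn => Classical.choice hn)⟩
  have hexk : ∀ r m, ∃ H, ¬ Nonempty (RRd T t r) → Kills T H r (t ++ [m]) := by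
    intro r m
    by_cases hr : Nonempty (RRd T t r)
    · exact ⟨∅, fun h' => absurd hr h'⟩
    · obtain ⟨H, hH⟩ := exists_kills (hBadLeaf r hr m); exact ⟨H, fun _ => hH⟩
  choose K hK using hexk
  set H : Set (List ℕ) := {q | q <+: s ∨ (s <+: q ∧
      (∀ p, s <+: p → p <+: q → ¬ Nonempty (RRd T t p)) ∧
      (∀ p m, s <+: p → p <+: q → m + s.length ≤ p.length → q ∈ K p m))} with hHdef
  have hscond1 : ∀ p, s <+: p → p <+: s → ¬ Nonempty (RRd T t p) := by
    intro p hsp hps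
    have hp : p = s := prefix_antisymm hps hsp
    subst hp; exact hs
  have hscond2 : ∀ p m, s <+: p → p <+: s → m + s.length ≤ p.length → s ∈ K p m := by
    intro p m hsp hps hm
    have hp : p = s := prefix_antisymm hps hsp
    subst hp
    have hm0 : m = 0 := by omega
    subst hm0
    exact (hK p 0 hs).1.2.1
  have hHech : IsHechlerRoot H s := by
    refine ⟨?_, Or.inr ⟨List.prefix_rfl, hscond1, hscond2⟩, ?_, ?_⟩
    · -- subtree
      intro q hq p hp
      rcases hq with hq | ⟨hsq, hbad, hks⟩
      · exact Or.inl (hp.trans hq)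
      · rcases List.prefix_or_prefix_of_prefix hp hsq with h' | h'
        · exact Or.inl h'
        · refine Or.inr ⟨h', fun p' hsp' hp'p => hbad p' hsp' (hp'p.trans hp),
            fun p' m hsp' hp'p hm => ?_⟩
          have hq' := hks p' m hsp' (hp'p.trans hp) hm
          have hbp' : ¬ Nonempty (RRd T t p') := hbad p' hsp' (hp'p.trans hp)
          exact (hK p' m hbp').1.1 q hq' p hp
    · -- comparability
      intro q hq; rcases hq with hq | ⟨hsq, _, _⟩
      · exact Or.inl hq
      · exact Or.inr hsq
    · -- splitting
      intro q hq hsq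
      have hq' : (∀ p, s <+: p → p <+: q → ¬ Nonempty (RRd T t p)) ∧
          (∀ p m, s <+: p → p <+: q → m + s.length ≤ p.length → q ∈ K p m) := by
        rcases hq with hq | ⟨_, h1, h2⟩
        · have hqs : q = s := prefix_antisymm hq hsq
          subst hqs
          exact ⟨hscond1, hscond2⟩
        · exact ⟨h1, h2⟩
      have hbadq : ¬ Nonempty (RRd T t q) := hq'.1 q hsq List.prefix_rfl
      have hbig : ({k | Nonempty (RRd T t (q ++ [k]))} ∪
          ⋃ i ∈ Finset.range (q.length + 1), ⋃ m ∈ Finset.range (q.length + 1),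
            {k | s <+: q.take i ∧ m + s.length ≤ i ∧ q ++ [k] ∉ K (q.take i) m}).Finite := by
        apply Set.Finite.union (hBadChild q hbadq)
        apply Set.Finite.biUnion (Finset.range (q.length + 1)).finite_toSet
        intro i hi
        apply Set.Finite.biUnion (Finset.range (q.length + 1)).finite_toSet
        intro m _
        by_cases hc : s <+: q.take i ∧ m + s.length ≤ i
        · have hile : i ≤ q.length := by
            have := Finset.mem_coe.mp hi
            simp only [Finset.mem_range] at this
            omega
          have h1 : q.take i <+: q := List.take_prefix i q
          have hbadp : ¬ Nonempty (RRd T t (q.take i)) := hq'.1 _ hc.1 h1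
          have hqK : q ∈ K (q.take i) m := by
            apply hq'.2 _ m hc.1 h1
            rw [List.length_take]
            omega
          apply Set.Finite.subset ((hK _ m hbadp).1.2.2.2 q hqK h1)
          intro k hk
          exact hk.2.2
        · apply Set.Finite.subset Set.finite_empty
          intro k hk
          exact absurd ⟨hk.1, hk.2.1⟩ hc
      apply Set.Finite.subset hbig
      intro k hk
      by_contra hnot
      simp only [Set.mem_union, Set.mem_iUnion, Set.mem_setOf_eq, not_or, not_exists,
        not_and] at hnot
      obtain ⟨hk0, hkim⟩ := hnot
      apply hk
      refine Or.inr ⟨hsq.trans ⟨[k], rfl⟩, ?_, ?_⟩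
      · intro p hsp hpq
        rcases prefix_concat_cases hpq with hp | rfl
        · exact hq'.1 p hsp hp
        · exact hk0
      · intro p m hsp hpq hm
        rcases prefix_concat_cases hpq with hp | rfl
        · have hip : p = q.take p.length := List.prefix_iff_eq_take.mp hp
          have hplen : p.length ∈ Finset.range (q.length + 1) := by
            simp only [Finset.mem_range]
            have := hp.length_le
            omega
          have hmlen : m ∈ Finset.range (q.length + 1) := by
            simp only [Finset.mem_range]
            have := hp.length_le
            have := hsp.length_le
            omega
          by_contra hno
          exact hkim p.length hplen m hmlen (hip ▸ hsp) hm (hip ▸ hno)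
        · exact (hK _ m hk0).1.2.1
  obtain ⟨z, ⟨hzs, y, hyt, hbr⟩, hzB⟩ := h H hHech
  set m := y t.length with hmdef
  have hym : res y (t.length + 1) = t ++ [m] := by rw [res_succ, hyt]
  have hsr : s <+: res z (s.length + m) := by
    have := res_prefix z (Nat.le_add_right s.length m)
    rwa [hzs] at this
  have hmem1 := hzB (s.length + m + 1)
  rcases hmem1 with h1 | ⟨hs1, hbad1, hks1⟩
  · have := h1.length_le
    rw [res_length] at this
    have := List.IsPrefix.length_le hsr
    rw [res_length] at this
    omega
  · have hrpre : res z (s.length + m) <+: res z (s.length + m + 1) :=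
      res_prefix z (Nat.le_succ _)
    have hbadr : ¬ Nonempty (RRd T t (res z (s.length + m))) := hbad1 _ hsr hrpre
    have hKr := hK (res z (s.length + m)) m hbadr
    have hzAr : z ∈ Aset T (res z (s.length + m)) (t ++ [m]) := by
      refine ⟨?_, y, ?_, hbr⟩
      · rw [res_length]
      · rw [List.length_append, List.length_singleton, hym]
    have hzBr : z ∈ branches (K (res z (s.length + m)) m) := by
      intro n
      rcases le_or_gt n (s.length + m) with hn | hn
      · exact hKr.1.1 _ hKr.1.2.1 _ (res_prefix z hn)
      · have h2 := hzB n
        rcases h2 with h2 | ⟨hs2, hbad2, hks2⟩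
        · have := h2.length_le
          rw [res_length] at this
          have := hsr.length_le
          rw [res_length] at this
          omega
        · apply hks2 _ m hsr (res_prefix z hn.le)
          rw [res_length]
          omega
    exact hKr.2 z hzAr hzBr

def ftree {T : Set (List ℕ × List ℕ)} {t : List ℕ} : {r : List ℕ} → RRd T t r → Set (List ℕ)
  | _, RRd.leaf r _ => {q | q = r ∨ ∃ k, q = r ++ [k] ∧ ∃ n, Large T (r ++ [k]) (t ++ [n])}
  | _, RRd.node r S _ g => {q | q = r ∨ ∃ n, ∃ hn : n ∈ S, q ∈ ftree (g n hn)}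

variable {T : Set (List ℕ × List ℕ)} {t : List ℕ}

lemma ftree_prefix : ∀ {r : List ℕ} (d : RRd T t r), ∀ q ∈ ftree d, r <+: q := by
  intro r d
  induction d with
  | leaf r h =>
    intro q hq
    rcases hq with rfl | ⟨k, rfl, _⟩
    · exact List.prefix_rfl
    · exact List.prefix_append r [k]
  | node r S hS g IH =>
    intro q hq
    rcases hq with rfl | ⟨n, hn, hq⟩
    · exact List.prefix_rfl
    · exact (List.prefix_append r [n]).trans (IH n hn q hq)

lemma ftree_root : ∀ {r : List ℕ} (d : RRd T t r), r ∈ ftree d := by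
  intro r d
  cases d <;> exact Or.inl rfl

lemma ftree_closed : ∀ {r : List ℕ} (d : RRd T t r), ∀ q ∈ ftree d, ∀ p, r <+: p → p <+: q →
    p ∈ ftree d := by
  intro r d
  induction d with
  | leaf r h =>
    intro q hq p hrp hpq
    rcases hq with rfl | ⟨k, rfl, hn⟩
    · exact Or.inl (prefix_antisymm hpq hrp)
    · rcases prefix_concat_cases hpq with hp | rfl
      · exact Or.inl (prefix_antisymm hp hrp)
      · exact Or.inr ⟨k, rfl, hn⟩
  | node r S hS g IH =>
    intro q hq p hrp hpq
    rcases hq with rfl | ⟨n, hn, hq⟩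
    · exact Or.inl (prefix_antisymm hpq hrp)
    · rcases le_or_gt p.length r.length with hl | hl
      · exact Or.inl ((hrp.eq_of_length (le_antisymm hrp.length_le hl)).symm)
      · have h1 : r ++ [n] <+: q := ftree_prefix (g n hn) q hq
        have hrn : r ++ [n] <+: p := by
          rcases List.prefix_or_prefix_of_prefix hpq h1 with h' | h'
          · have hp : p = r ++ [n] := by
              apply h'.eq_of_length
              have := h'.length_le
              simp only [List.length_append, List.length_singleton] at this ⊢
              omega
            rw [hp]
          · exact h'
        exact Or.inr ⟨n, hn, IH n hn q hq p hrn hpq⟩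

lemma ftree_children_root : ∀ {r : List ℕ} (d : RRd T t r), {k | r ++ [k] ∈ ftree d}.Infinite := by
  intro r d
  cases d with
  | leaf r h =>
    obtain ⟨n0, hn0⟩ := h
    exact (large_splitting hn0).mono (fun k hk => Or.inr ⟨k, rfl, n0, hk⟩)
  | node r S hS g =>
    exact hS.mono (fun n hn => Or.inr ⟨n, hn, ftree_root (g n hn)⟩)

lemma ftree_splitting : ∀ {r : List ℕ} (d : RRd T t r), ∀ q, r <+: q →
    (∃ n, q ++ [n] ∈ ftree d) → {n | q ++ [n] ∈ ftree d}.Infinite := by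
  intro r d
  induction d with
  | leaf r h =>
    rintro q hrq ⟨n, hn⟩
    have hql : q = r := by
      rcases hn with hq | ⟨k, hqk, _⟩
      · exfalso
        have h1 := congrArg List.length hq
        have h2 := hrq.length_le
        simp only [List.length_append, List.length_singleton] at h1
        omega
      · have h1 := congrArg List.length hqk
        simp only [List.length_append, List.length_singleton] at h1
        exact (hrq.eq_of_length (by omega)).symm
    subst hql
    obtain ⟨n0, hn0⟩ := h
    exact (large_splitting hn0).mono (fun k hk => Or.inr ⟨k, rfl, n0, hk⟩)
  | node r S hS g IH =>
    rintro q hrq ⟨n, hn⟩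
    rcases hn with hq | ⟨n', hn', hq⟩
    · exfalso
      have h1 := congrArg List.length hq
      have h2 := hrq.length_le
      simp only [List.length_append, List.length_singleton] at h1
      omega
    · by_cases hqr : q = r
      · subst hqr
        exact hS.mono (fun j hj => Or.inr ⟨j, hj, ftree_root (g j hj)⟩)
      · have h1 : r ++ [n'] <+: q ++ [n] := ftree_prefix (g n' hn') _ hq
        have hlen : r.length < q.length := by
          rcases lt_or_eq_of_le hrq.length_le with h' | h'
          · exact h'
          · exact absurd (hrq.eq_of_length h').symm hqr
        have h2 : r ++ [n'] <+: q := by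
          rcases prefix_concat_cases h1 with h2 | h2
          · exact h2
          · exfalso
            have := congrArg List.length h2
            simp only [List.length_append, List.length_singleton] at this
            omega
        exact (IH n' hn' q h2 ⟨n, hq⟩).mono (fun j hj => Or.inr ⟨n', hn', hj⟩)

lemma ftree_leaf_large : ∀ {r : List ℕ} (d : RRd T t r), ∀ q ∈ ftree d,
    (∀ n, q ++ [n] ∉ ftree d) → ∃ n, Large T q (t ++ [n]) := by
  intro r d
  induction d with
  | leaf r h =>
    intro q hq hterm
    rcases hq with rfl | ⟨k, rfl, hn⟩
    · exfalso
      obtain ⟨n0, hn0⟩ := h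
      obtain ⟨k, hk⟩ := (large_splitting hn0).nonempty
      exact hterm k (Or.inr ⟨k, rfl, n0, hk⟩)
    · exact hn
  | node r S hS g IH =>
    intro q hq hterm
    rcases hq with rfl | ⟨n, hn, hq⟩
    · exfalso
      obtain ⟨n, hn⟩ := hS.nonempty
      exact hterm n (Or.inr ⟨n, hn, ftree_root (g n hn)⟩)
    · exact IH n hn q hq (fun j hj => hterm j (Or.inr ⟨n, hn, hj⟩))

lemma ftree_wf : ∀ {r : List ℕ} (d : RRd T t r), ∀ x : ℕ → ℕ,
    ¬ (∀ n, r.length ≤ n → res x n ∈ ftree d) := by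
  intro r d
  induction d with
  | leaf r h =>
    intro x hx
    have h2 := hx (r.length + 2) (by omega)
    rcases h2 with he | ⟨k, he, _⟩
    · have := congrArg List.length he
      rw [res_length] at this
      omega
    · have := congrArg List.length he
      rw [res_length] at this
      simp only [List.length_append, List.length_singleton] at this
      omega
  | node r S hS g IH =>
    intro x hx
    have h1 := hx (r.length + 1) (by omega)
    rcases h1 with he | ⟨n, hn, hq⟩
    · have := congrArg List.length he
      rw [res_length] at this
      omega
    · have hpre : r ++ [n] <+: res x (r.length + 1) := ftree_prefix (g n hn) _ hq
      have heq : r ++ [n] = res x (r.length + 1) :=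
        hpre.eq_of_length (by simp [res_length])
      apply IH n hn x
      intro j hj
      have hj' : r.length + 1 ≤ j := by simpa using hj
      have h2 := hx j (by omega)
      rcases h2 with he2 | ⟨n', hn', hq2⟩
      · have := congrArg List.length he2
        rw [res_length] at this
        omega
      · have hpre2 : r ++ [n'] <+: res x j := ftree_prefix (g n' hn') _ hq2
        have hn'n : n' = n := concat_prefix_concat hpre2 (heq ▸ res_prefix x hj')
        subst hn'n
        exact hq2

theorem exists_wellfounded_splitting_tree (T : Set (List ℕ × List ℕ)) (hT : IsTree2 T)
    (s t : List ℕ)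
    (h : ∀ H : Set (List ℕ), IsHechlerRoot H s → (Aset T s t ∩ branches H).Nonempty) :
    ∃ T' B : Set (List ℕ),
      -- T' is an infinite subtree all of whose members are comparable with s, with root s
      T'.Infinite ∧ IsSubtree T' ∧ s ∈ T' ∧ (∀ r ∈ T', r <+: s ∨ s <+: r) ∧
      -- T' is well-founded: it has no infinite branch
      (¬ ∃ x : ℕ → ℕ, ∀ n, res x n ∈ T') ∧
      -- B is the set of terminal (maximal) nodes of T'
      B = {r ∈ T' | ∀ n : ℕ, r ++ [n] ∉ T'} ∧
      -- (1) each nonterminal node of T' extending s is ω-splitting in T'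
      (∀ r ∈ T', s <+: r → r ∉ B → {n : ℕ | r ++ [n] ∈ T'}.Infinite) ∧
      -- (2) each terminal node r has a witness n as required
      (∀ r ∈ B, ∃ n : ℕ, ∀ H : Set (List ℕ), IsHechlerRoot H r →
        (Aset T r (t ++ [n]) ∩ branches H).Nonempty) := by

  obtain ⟨d⟩ := nonempty_RRd h
  refine ⟨{q | q <+: s} ∪ ftree d, _, ?_, ?_, Or.inl List.prefix_rfl, ?_, ?_, rfl, ?_, ?_⟩
  · -- infinite
    have hc := ftree_children_root d
    have hinj := hc.image (f := fun k => s ++ [k]) (fun a _ b _ hab => by simpa using hab)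
    apply hinj.mono
    rintro _ ⟨k, hk, rfl⟩
    exact Or.inr hk
  · -- subtree
    intro q hq p hp
    rcases hq with hq | hq
    · exact Or.inl (hp.trans hq)
    · rcases List.prefix_or_prefix_of_prefix hp (ftree_prefix d q hq) with h' | h'
      · exact Or.inl h'
      · exact Or.inr (ftree_closed d q hq p h' hp)
  · -- comparability
    intro r hr
    rcases hr with hr | hr
    · exact Or.inl hr
    · exact Or.inr (ftree_prefix d r hr)
  · -- well-founded
    rintro ⟨x, hx⟩
    apply ftree_wf d x
    intro n hn
    rcases hx n with h' | h'
    · have hlen := h'.length_le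
      rw [res_length] at hlen
      have hns : n = s.length := le_antisymm hlen hn
      subst hns
      have heq : res x s.length = s := h'.eq_of_length (by rw [res_length])
      rw [heq]
      exact ftree_root d
    · exact h'
  · -- splitting at nonterminal nodes
    intro r hr hsr hrB
    have hex : ∃ n, r ++ [n] ∈ ({q | q <+: s} ∪ ftree d) := by
      by_contra hno
      push_neg at hno
      exact hrB ⟨hr, hno⟩
    obtain ⟨n, hn⟩ := hex
    have hn' : r ++ [n] ∈ ftree d := by
      rcases hn with h' | h'
      · exfalso
        have h1 := h'.length_le
        have h2 := hsr.length_le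
        simp only [List.length_append, List.length_singleton] at h1
        omega
      · exact h'
    exact (ftree_splitting d r hsr ⟨n, hn'⟩).mono (fun j hj => Or.inr hj)
  · -- terminal nodes
    rintro r ⟨hrT, hterm⟩
    have hrf : r ∈ ftree d := by
      rcases hrT with h' | h'
      · by_cases hrs : r = s
        · rw [hrs]; exact ftree_root d
        · exfalso
          obtain ⟨a, ha⟩ := exists_concat_prefix h' hrs
          exact hterm a (Or.inl ha)
      · exact h'
    exact ftree_leaf_large d r hrf (fun n hn => hterm n (Or.inr hn))
end

section
/- Let F be a filter on ω extending the cofinite filter and let H ∈ H_F. Then there exists an infinite set X ⊆ ω such that every infinite subset of X is the range of some branch of H; that is, for every infinite Y ⊆ X there exists f ∈ [H] with range(f) = Y. -/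
/-- `H ∈ H_F`: a nonempty subtree each of whose nodes splits along a set in `F`. -/
def MemHechlerF (F : Filter ℕ) (H : Set (List ℕ)) : Prop :=
  IsSubtree H ∧ [] ∈ H ∧ ∀ s ∈ H, {n : ℕ | s ++ [n] ∈ H} ∈ F

/-!
Choose `a 0 < a 1 < ⋯` so that `a n` extends every increasing node of `H` built from
`a 0, …, a (n - 1)`. There are only finitely many such nodes, so the valid choices form a set
in `F`; as `F` is proper and extends the cofinite filter, one of them exceeds all earlier
values. Then `X = range a` works: an infinite `Y ⊆ X`, listed increasingly,
enters `H` one value at a time.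
-/

theorem List.finite_setOf_pairwise_lt_forall_mem {α : Type*} [LinearOrder α] (p : Finset α) :
    {l : List α | l.Pairwise (· < ·) ∧ ∀ x ∈ l, x ∈ p}.Finite := by
  refine (p.powerset.image fun q => q.sort (· ≤ ·)).finite_toSet.subset ?_
  rintro l ⟨hl, hlp⟩
  simp only [Finset.coe_image, Finset.coe_powerset, Set.mem_image, Set.mem_preimage,
    Set.mem_powerset_iff, Finset.coe_subset]
  exact ⟨l.toFinset, fun x hx => hlp x (List.mem_toFinset.1 hx),
    (List.toFinset_sort _ hl.nodup).2 (hl.imp le_of_lt)⟩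

theorem exists_seq_forall_image_range {α : Type*} [DecidableEq α] {Q : Finset α → α → Prop}
    (h : ∀ p, ∃ m, Q p m) : ∃ a : ℕ → α, ∀ n, Q ((Finset.range n).image a) (a n) := by
  choose g hg using h
  let A : ℕ → Finset α := fun n => Nat.rec ∅ (fun _ p => insert (g p) p) n
  have hA : ∀ n, A n = (Finset.range n).image fun k => g (A k) := by
    intro n
    induction n with
    | zero => rfl
    | succ n ih => rw [Finset.range_add_one, Finset.image_insert, ← ih]
  exact ⟨fun n => g (A n), fun n => hA n ▸ hg (A n)⟩

theorem res_add_one (x : ℕ → ℕ) (n : ℕ) : res x (n + 1) = res x n ++ [x n] := by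
  rw [res, List.ofFn_succ', List.concat_eq_append]; rfl

theorem pairwise_res_of_strictMono {x : ℕ → ℕ} (hx : StrictMono x) (n : ℕ) :
    (res x n).Pairwise (· < ·) :=
  List.pairwise_ofFn.2 fun _ _ hij => hx hij

theorem mem_res {x : ℕ → ℕ} {n y : ℕ} : y ∈ res x n ↔ ∃ i < n, x i = y := by
  simp [res, List.mem_ofFn, Fin.exists_iff]

def IsCommonSuccessor (H : Set (List ℕ)) (p : Finset ℕ) (m : ℕ) : Prop :=
  ∀ s ∈ H, s.Pairwise (· < ·) → (∀ x ∈ s, x ∈ p) → s ++ [m] ∈ H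

section

variable {F : Filter ℕ} {H : Set (List ℕ)}

theorem MemHechlerF.eventually_isCommonSuccessor (hH : MemHechlerF F H) (p : Finset ℕ) :
    ∀ᶠ m in F, IsCommonSuccessor H p m := by
  have hfin : {s | s ∈ H ∧ s.Pairwise (· < ·) ∧ ∀ x ∈ s, x ∈ p}.Finite :=
    (List.finite_setOf_pairwise_lt_forall_mem p).subset fun _ hs => hs.2
  filter_upwards [(Filter.biInter_mem hfin).2 fun s hs => hH.2.2 s hs.1] with m hm s hs hlt hp
  exact Set.mem_iInter₂.1 hm s ⟨hs, hlt, hp⟩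

theorem MemHechlerF.exists_isCommonSuccessor_gt [F.NeBot] (hF : F ≤ Filter.cofinite)
    (hH : MemHechlerF F H) (p : Finset ℕ) :
    ∃ m, IsCommonSuccessor H p m ∧ ∀ x ∈ p, x < m := by
  have hgt : ∀ᶠ m in F, ∀ x ∈ p, x < m := hF <| by
    rw [Nat.cofinite_eq_atTop]
    exact (Filter.eventually_all_finset p).2 fun x _ => Filter.eventually_gt_atTop x
  exact ((hH.eventually_isCommonSuccessor p).and hgt).exists

theorem mem_branches_of_range_subset {a f : ℕ → ℕ} (hnil : [] ∈ H) (ha : StrictMono a)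
    (hsucc : ∀ n, IsCommonSuccessor H ((Finset.range n).image a) (a n))
    (hf : StrictMono f) (hfa : Set.range f ⊆ Set.range a) : f ∈ branches H := by
  choose idx hidx using fun i => hfa (Set.mem_range_self i)
  intro n
  induction n with
  | zero => exact hnil
  | succ n ih =>
    rw [res_add_one, ← hidx n]
    refine hsucc (idx n) _ ih (pairwise_res_of_strictMono hf n) fun y hy => ?_
    obtain ⟨i, hi, rfl⟩ := mem_res.1 hy
    have hlt : a (idx i) < a (idx n) := by rw [hidx, hidx]; exact hf hi
    exact Finset.mem_image.2 ⟨idx i, Finset.mem_range.2 (ha.lt_iff_lt.1 hlt), hidx i⟩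

end

theorem range_of_hechlerF (F : Filter ℕ) [F.NeBot] (hF : F ≤ Filter.cofinite)
    (H : Set (List ℕ)) (hH : MemHechlerF F H) :
    ∃ X : Set ℕ, X.Infinite ∧
      ∀ Y : Set ℕ, Y ⊆ X → Y.Infinite → ∃ f ∈ branches H, Set.range f = Y := by
  obtain ⟨a, ha⟩ := exists_seq_forall_image_range (hH.exists_isCommonSuccessor_gt hF)
  have ha_mono : StrictMono a := strictMono_nat_of_lt_succ fun n =>
    (ha (n + 1)).2 _ (Finset.mem_image_of_mem a (Finset.self_mem_range_succ n))
  refine ⟨Set.range a, Set.infinite_range_of_injective ha_mono.injective, fun Y hYa hY => ?_⟩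
  have hrange : Set.range (Nat.nth (· ∈ Y)) = Y := Nat.range_nth_of_infinite hY
  refine ⟨Nat.nth (· ∈ Y), ?_, hrange⟩
  exact mem_branches_of_range_subset hH.2.1 ha_mono (fun n => (ha n).1)
    (Nat.nth_strictMono hY) (hrange.subset.trans hYa)
end
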